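/- arXiv:2011.13419 — 2 statements merged into one kernel-verified Lean document; each statement's English description precedes it below -/
import Mathlib

section
/- Assume in addition that every complex eigenvalue of A − 𝟙_N·u (viewed as a matrix over ℂ) has modulus strictly less than 1. Let x : ℕ → Matrix (Fin N) (Fin n) ℝ and v : ℕ → Matrix (Fin 1) (Fin n) ℝ satisfy x(k) = A·x(k−1) − 𝟙_N·v(k) for every k ≥ 1. Then the disagreement x(k) − 𝟙_N·u·x(k) converges to 0 as k → ∞; in particular, for every ε > 0 there exists k₀ such that ‖x(k) − 𝟙_N·u·x(k)‖ < ε for all k > k₀. (Consensus consequence of Lemma 3 in the paper.) -/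
attribute [local instance] Matrix.frobeniusNormedAddCommGroup

/-!
The disagreement `d y = y - 𝟙 u y` satisfies `d (A y - 𝟙 w) = (A - 𝟙 u) (d y)`: the input term
`𝟙 w` lies in the kernel of `d` because `u 𝟙 = 1`, and `𝟙 u` commutes with `A` because `A 𝟙 = 𝟙`
and `u A = u`. Hence `d (x k) = (A - 𝟙 u) ^ k (d (x 0))`, and the powers of a matrix whose
complex spectrum lies in the open unit disc tend to `0` by Gelfand's formula.
-/

open Filter Topology

section SpectralRadius

variable {A : Type*} [NormedRing A] [NormedAlgebra ℂ A] [CompleteSpace A]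

theorem spectralRadius_lt_one_of_forall_norm_lt_one {a : A}
    (h : ∀ μ ∈ spectrum ℂ a, ‖μ‖ < 1) : spectralRadius ℂ a < 1 := by
  rcases (spectrum ℂ a).eq_empty_or_nonempty with hempty | hne
  · simp [spectralRadius, hempty]
  · exact_mod_cast spectrum.spectralRadius_lt_of_forall_lt_of_nonempty hne
      (r := 1) fun μ hμ => by exact_mod_cast h μ hμ

/-- By Gelfand's formula `‖a ^ n‖ ≤ c ^ n` eventually, for any `c` strictly between the
spectral radius and `1`. -/
theorem tendsto_pow_atTop_nhds_zero_of_spectralRadius_lt_one {a : A}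
    (h : spectralRadius ℂ a < 1) : Tendsto (a ^ ·) atTop (𝓝 0) := by
  obtain ⟨c, hρc, hc1⟩ := ENNReal.lt_iff_exists_nnreal_btwn.mp h
  have hroot : ∀ᶠ n : ℕ in atTop, ENNReal.ofReal (‖a ^ n‖ ^ (1 / n : ℝ)) < c :=
    (spectrum.pow_norm_pow_one_div_tendsto_nhds_spectralRadius a).eventually_lt_const hρc
  have hbound : ∀ᶠ n : ℕ in atTop, ‖a ^ n‖ ≤ (c : ℝ) ^ n := by
    filter_upwards [hroot, eventually_gt_atTop 0] with n hn hn0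
    have hlt : ‖a ^ n‖ ^ ((n : ℝ)⁻¹) < c := by
      simpa using (ENNReal.ofReal_lt_iff_lt_toReal (Real.rpow_nonneg (norm_nonneg _) _)
        ENNReal.coe_ne_top).mp hn
    rw [Real.rpow_inv_lt_iff_of_pos (norm_nonneg _) c.coe_nonneg (Nat.cast_pos.mpr hn0),
      Real.rpow_natCast] at hlt
    exact hlt.le
  refine tendsto_zero_iff_norm_tendsto_zero.mpr <|
    squeeze_zero' (.of_forall fun _ => norm_nonneg _) hbound ?_
  exact tendsto_pow_atTop_nhds_zero_of_lt_one c.coe_nonneg (by exact_mod_cast hc1)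

end SpectralRadius

section ComplexMatrix

attribute [local instance] Matrix.frobeniusNormedRing Matrix.frobeniusNormedAlgebra

theorem Matrix.tendsto_pow_atTop_nhds_zero_of_spectrum_complex {m : Type*} [Fintype m]
    [DecidableEq m] (B : Matrix m m ℝ)
    (h : ∀ μ ∈ spectrum ℂ (B.map (algebraMap ℝ ℂ)), ‖μ‖ < 1) :
    Tendsto (B ^ ·) atTop (𝓝 0) := by
  have hC : Tendsto ((B.map (algebraMap ℝ ℂ)) ^ ·) atTop (𝓝 0) :=
    tendsto_pow_atTop_nhds_zero_of_spectralRadius_lt_one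
      (spectralRadius_lt_one_of_forall_norm_lt_one h)
  have hre : Continuous fun M : Matrix m m ℂ => M.map Complex.re :=
    continuous_id.matrix_map Complex.continuous_re
  convert (hre.tendsto 0).comp hC using 1
  · ext k : 1
    rw [Function.comp_apply, ← RingHom.mapMatrix_apply, ← map_pow, RingHom.mapMatrix_apply,
      Matrix.map_map]
    ext i j
    simp
  · simp

end ComplexMatrix

section Disagreement

variable {R m ι p : Type*} [Ring R] [Fintype m] [Fintype ι] [DecidableEq ι]
  {A : Matrix m m R} {one : Matrix m ι R} {u : Matrix ι m R}

def disagreement (one : Matrix m ι R) (u : Matrix ι m R) (y : Matrix m p R) : Matrix m p R :=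
  y - one * u * y

theorem disagreement_mul_sub (hrow : A * one = one) (huA : u * A = u) (hu1 : u * one = 1)
    (y : Matrix m p R) (w : Matrix ι p R) :
    disagreement one u (A * y - one * w) = (A - one * u) * disagreement one u y := by
  simp only [disagreement, Matrix.mul_sub, Matrix.sub_mul, Matrix.mul_assoc]
  simp only [← Matrix.mul_assoc u, ← Matrix.mul_assoc A one, huA, hu1, hrow, Matrix.one_mul]
  abel

theorem disagreement_eq_pow_mul [DecidableEq m] (hrow : A * one = one) (huA : u * A = u)
    (hu1 : u * one = 1)
    {x : ℕ → Matrix m p R} {v : ℕ → Matrix ι p R}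
    (hrec : ∀ k, 1 ≤ k → x k = A * x (k - 1) - one * v k) (k : ℕ) :
    disagreement one u (x k) = (A - one * u) ^ k * disagreement one u (x 0) := by
  induction k with
  | zero => simp
  | succ k ih =>
    rw [hrec (k + 1) le_add_self, Nat.add_sub_cancel, disagreement_mul_sub hrow huA hu1, ih,
      ← Matrix.mul_assoc, pow_succ']

end Disagreement

theorem disagreement_tendsto_zero_general
    (N n : ℕ)
    (A : Matrix (Fin N) (Fin N) ℝ)
    (one : Matrix (Fin N) (Fin 1) ℝ)
    (u : Matrix (Fin 1) (Fin N) ℝ)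
    (hrow : A * one = one) (huA : u * A = u) (hu1 : u * one = 1)
    (hspec : ∀ μ : ℂ,
      μ ∈ spectrum ℂ ((A - one * u).map (algebraMap ℝ ℂ)) → ‖μ‖ < 1)
    (x : ℕ → Matrix (Fin N) (Fin n) ℝ)
    (v : ℕ → Matrix (Fin 1) (Fin n) ℝ)
    (hrec : ∀ k, 1 ≤ k → x k = A * x (k - 1) - one * v k) :
    Filter.Tendsto (fun k : ℕ => x k - one * u * x k) Filter.atTop (nhds 0) ∧
      ∀ ε : ℝ, 0 < ε → ∃ k₀ : ℕ, ∀ k, k₀ < k → ‖x k - one * u * x k‖ < ε := by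
  have htend : Tendsto (fun k => disagreement one u (x k)) atTop (𝓝 0) := by
    have hmul : Continuous fun M : Matrix (Fin N) (Fin N) ℝ => M * disagreement one u (x 0) :=
      continuous_id.matrix_mul continuous_const
    have hpow := (hmul.tendsto 0).comp
      (Matrix.tendsto_pow_atTop_nhds_zero_of_spectrum_complex _ hspec)
    rw [Matrix.zero_mul] at hpow
    exact hpow.congr fun k => (disagreement_eq_pow_mul hrow huA hu1 hrec k).symm
  refine ⟨htend, fun ε hε => ?_⟩
  obtain ⟨k₀, hk₀⟩ := Metric.tendsto_atTop.mp htend ε hε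
  exact ⟨k₀, fun k hk => by simpa [disagreement, dist_eq_norm] using hk₀ k hk.le⟩

/-- Consensus consequence of Lemma 3: under the spectral condition on
`A - 𝟙_N·u`, the disagreement `x(k) - 𝟙_N·u·x(k)` of the iterates
`x(k) = A·x(k-1) - 𝟙_N·v(k)` converges to `0`; in particular for every `ε > 0`
there is `k₀` with `‖x(k) - 𝟙_N·u·x(k)‖ < ε` for all `k > k₀`. -/
theorem disagreement_tendsto_zero
    (N n : ℕ) (hN : 0 < N) (hn : 0 < n)
    (A : Matrix (Fin N) (Fin N) ℝ)
    (one : Matrix (Fin N) (Fin 1) ℝ) (hone : ∀ i j, one i j = 1)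
    (u : Matrix (Fin 1) (Fin N) ℝ)
    (hrow : A * one = one) (huA : u * A = u) (hu1 : u * one = 1)
    (hspec : ∀ μ : ℂ,
      μ ∈ spectrum ℂ ((A - one * u).map (algebraMap ℝ ℂ)) → ‖μ‖ < 1)
    (x : ℕ → Matrix (Fin N) (Fin n) ℝ)
    (v : ℕ → Matrix (Fin 1) (Fin n) ℝ)
    (hrec : ∀ k, 1 ≤ k → x k = A * x (k - 1) - one * v k) :
    Filter.Tendsto (fun k : ℕ => x k - one * u * x k) Filter.atTop (nhds 0) ∧
      ∀ ε : ℝ, 0 < ε → ∃ k₀ : ℕ, ∀ k, k₀ < k → ‖x k - one * u * x k‖ < ε :=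
  disagreement_tendsto_zero_general N n A one u hrow huA hu1 hspec x v hrec
end

section
/- Let f_i : E → ℝ for i = 1,…,N be differentiable, σ_i-strongly convex (σ_i > 0), with l_i-Lipschitz gradients (l_i > 0), let w_i ≥ 0 be weights, let x* ∈ E, and let α ≥ 0. Then for every y ∈ E, ‖(y − x*) − α·Σ_i w_i·(∇f_i(y) − ∇f_i(x*))‖² ≤ (1 + N·Σ_i (α·w_i·l_i)² − 2α·Σ_i w_i·σ_i)·‖y − x*‖². (Core contraction estimate underlying Theorem 1 of the paper, obtained by splitting the sum over agents, applying the extension of co-coercivity, and using the Lipschitz bound on each gradient difference.) -/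
/-!
Strong convexity of `f_i` makes its gradient strongly monotone,
`σ_i ‖y - x*‖² ≤ ⟪∇f_i(y) - ∇f_i(x*), y - x*⟫`, which bounds the cross term of
`‖d - α S‖² = ‖d‖² - 2α⟪d, S⟫ + α²‖S‖²` (with `d = y - x*`, `S = Σ_i w_i (∇f_i(y) - ∇f_i(x*))`)
from below, while the Lipschitz bounds and Cauchy–Schwarz `(Σ_i a_i)² ≤ N Σ_i a_i²` bound `‖S‖²`.
-/

open InnerProductSpace Set

section Algebra

variable {E : Type*} [NormedAddCommGroup E] [InnerProductSpace ℝ E]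
  {ι : Type*} [Fintype ι] (d : E) (g : ι → E) {w : ι → ℝ} (hw : ∀ i, 0 ≤ w i)
include hw

lemma sum_mul_mul_norm_sq_le_inner_sum_smul {σ : ι → ℝ} (hσ : ∀ i, σ i * ‖d‖ ^ 2 ≤ ⟪g i, d⟫_ℝ) :
    (∑ i, w i * σ i) * ‖d‖ ^ 2 ≤ ⟪d, ∑ i, w i • g i⟫_ℝ := by
  rw [inner_sum, Finset.sum_mul]
  gcongr with i
  rw [real_inner_smul_right, real_inner_comm, mul_assoc]
  exact mul_le_mul_of_nonneg_left (hσ i) (hw i)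

lemma norm_sum_smul_sq_le {l : ι → ℝ} (hl : ∀ i, ‖g i‖ ≤ l i * ‖d‖) :
    ‖∑ i, w i • g i‖ ^ 2 ≤ Fintype.card ι * ∑ i, (w i * l i) ^ 2 * ‖d‖ ^ 2 := by
  have hterm : ∀ i, ‖w i • g i‖ ≤ w i * l i * ‖d‖ := fun i => by
    rw [norm_smul, Real.norm_of_nonneg (hw i), mul_assoc]
    exact mul_le_mul_of_nonneg_left (hl i) (hw i)
  calc ‖∑ i, w i • g i‖ ^ 2 ≤ (∑ i, w i * l i * ‖d‖) ^ 2 := by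
        gcongr
        exact (norm_sum_le _ _).trans (Finset.sum_le_sum fun i _ => hterm i)
    _ ≤ Fintype.card ι * ∑ i, (w i * l i * ‖d‖) ^ 2 := sq_sum_le_card_mul_sum_sq
    _ = Fintype.card ι * ∑ i, (w i * l i) ^ 2 * ‖d‖ ^ 2 := by simp only [mul_pow]

lemma norm_sub_smul_sum_smul_sq_le {σ l : ι → ℝ}
    (hσ : ∀ i, σ i * ‖d‖ ^ 2 ≤ ⟪g i, d⟫_ℝ) (hl : ∀ i, ‖g i‖ ≤ l i * ‖d‖) {α : ℝ} (hα : 0 ≤ α) :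
    ‖d - α • ∑ i, w i • g i‖ ^ 2 ≤
      (1 + Fintype.card ι * ∑ i, (α * w i * l i) ^ 2 - 2 * α * ∑ i, w i * σ i) * ‖d‖ ^ 2 := by
  have hcross := mul_le_mul_of_nonneg_left (sum_mul_mul_norm_sq_le_inner_sum_smul d g hw hσ)
    (by positivity : (0 : ℝ) ≤ 2 * α)
  have hquad := mul_le_mul_of_nonneg_left (norm_sum_smul_sq_le d g hw hl) (sq_nonneg α)
  have hexpand : ‖d - α • ∑ i, w i • g i‖ ^ 2 =
      ‖d‖ ^ 2 - 2 * α * ⟪d, ∑ i, w i • g i⟫_ℝ + α ^ 2 * ‖∑ i, w i • g i‖ ^ 2 := by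
    rw [norm_sub_sq_real, real_inner_smul_right, norm_smul, Real.norm_of_nonneg hα, mul_pow]
    ring
  have hsum : ∑ i, (α * w i * l i) ^ 2 = α ^ 2 * ∑ i, (w i * l i) ^ 2 := by
    rw [Finset.mul_sum]
    exact Finset.sum_congr rfl fun i _ => by ring
  rw [hexpand, hsum]
  rw [← Finset.sum_mul] at hquad
  linarith

end Algebra

section Gradient

variable {E : Type*} [NormedAddCommGroup E] [InnerProductSpace ℝ E] [CompleteSpace E]

lemma HasGradientAt.hasDerivAt_comp_lineMap {h : E → ℝ} {h' x y : E} {t : ℝ}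
    (hh : HasGradientAt h h' (AffineMap.lineMap x y t)) :
    HasDerivAt (fun s : ℝ => h (AffineMap.lineMap x y s)) ⟪h', y - x⟫_ℝ t := by
  have hcomp := hh.hasFDerivAt.comp_hasDerivAt t AffineMap.hasDerivAt_lineMap
  rw [toDual_apply_apply] at hcomp
  exact hcomp

lemma ConvexOn.inner_gradient_sub_nonneg {h : E → ℝ} {h' : E → E} (hconv : ConvexOn ℝ univ h)
    (hh : ∀ x, HasGradientAt h (h' x) x) (x y : E) :
    0 ≤ ⟪h' y - h' x, y - x⟫_ℝ := by
  have hline : ConvexOn ℝ univ (fun s : ℝ => h (AffineMap.lineMap x y s)) :=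
    hconv.comp_affineMap _
  have h0 := hline.le_slope_of_hasDerivAt (mem_univ 0) (mem_univ 1) one_pos
    (hh _).hasDerivAt_comp_lineMap
  have h1 := hline.slope_le_of_hasDerivAt (mem_univ 0) (mem_univ 1) one_pos
    (hh _).hasDerivAt_comp_lineMap
  simp only [AffineMap.lineMap_apply_zero, AffineMap.lineMap_apply_one] at h0 h1
  rw [inner_sub_left]
  linarith

lemma hasGradientAt_sub_half_mul_norm_sq {g : E → ℝ} {g' x : E} (hg : HasGradientAt g g' x)
    (σ : ℝ) : HasGradientAt (fun u => g u - σ / 2 * ‖u‖ ^ 2) (g' - σ • x) x := by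
  rw [hasGradientAt_iff_hasFDerivAt]
  have hsq := (hasStrictFDerivAt_norm_sq x).hasFDerivAt.const_mul (σ / 2)
  refine (hg.hasFDerivAt.sub hsq).congr_fderiv ?_
  ext v
  simp only [sub_apply, smul_apply, toDual_apply_apply, coe_innerSL_apply, nsmul_eq_mul,
    Nat.cast_ofNat, smul_eq_mul, inner_sub_left, real_inner_smul_left]
  ring

lemma ConvexOn.mul_norm_sq_le_inner_gradient_sub {g : E → ℝ} {g' : E → E} {σ : ℝ}
    (hsc : ConvexOn ℝ univ (fun x => g x - σ / 2 * ‖x‖ ^ 2)) (hg : ∀ x, HasGradientAt g (g' x) x)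
    (x y : E) :
    σ * ‖y - x‖ ^ 2 ≤ ⟪g' y - g' x, y - x⟫_ℝ := by
  have hmono :=
    hsc.inner_gradient_sub_nonneg (fun z => hasGradientAt_sub_half_mul_norm_sq (hg z) σ) x y
  rw [show g' y - σ • y - (g' x - σ • x) = (g' y - g' x) - σ • (y - x) by
    rw [smul_sub]; abel, inner_sub_left, real_inner_smul_left, real_inner_self_eq_norm_sq] at hmono
  linarith

end Gradient

theorem weighted_gradient_step_contraction_general
    {E : Type*} [NormedAddCommGroup E] [InnerProductSpace ℝ E] [CompleteSpace E]
    (N : ℕ)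
    (f : Fin N → E → ℝ) (f' : Fin N → E → E) (σ l : Fin N → ℝ)
    (hgrad : ∀ i x, HasGradientAt (f i) (f' i x) x)
    (hstrong : ∀ i, ConvexOn ℝ Set.univ (fun x => f i x - σ i / 2 * ‖x‖ ^ 2))
    (hlip : ∀ i x y, ‖f' i x - f' i y‖ ≤ l i * ‖x - y‖)
    (w : Fin N → ℝ) (hw : ∀ i, 0 ≤ w i)
    (xstar : E) (α : ℝ) (hα : 0 ≤ α) :
    ∀ y : E,
      ‖(y - xstar) - α • ∑ i, w i • (f' i y - f' i xstar)‖ ^ 2 ≤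
        (1 + (N : ℝ) * ∑ i, (α * w i * l i) ^ 2 - 2 * α * ∑ i, w i * σ i) *
          ‖y - xstar‖ ^ 2 := by
  intro y
  simpa using norm_sub_smul_sum_smul_sq_le (y - xstar) (fun i => f' i y - f' i xstar) hw
    (fun i => (hstrong i).mul_norm_sq_le_inner_gradient_sub (hgrad i) xstar y)
    (fun i => hlip i y xstar) hα

/-- Core contraction estimate of Theorem 1: for `σ_i`-strongly convex `f_i`
with `l_i`-Lipschitz gradients `f'_i`, nonnegative weights `w_i` and `α ≥ 0`,
`‖(y - x*) - α Σ_i w_i (∇f_i(y) - ∇f_i(x*))‖² ≤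
  (1 + N Σ_i (α w_i l_i)² - 2α Σ_i w_i σ_i) ‖y - x*‖²`. -/
theorem weighted_gradient_step_contraction
    {E : Type*} [NormedAddCommGroup E] [InnerProductSpace ℝ E] [CompleteSpace E]
    (N : ℕ) (hN : 0 < N)
    (f : Fin N → E → ℝ) (f' : Fin N → E → E) (σ l : Fin N → ℝ)
    (hσ : ∀ i, 0 < σ i) (hl : ∀ i, 0 < l i)
    (hgrad : ∀ i x, HasGradientAt (f i) (f' i x) x)
    (hstrong : ∀ i, ConvexOn ℝ Set.univ (fun x => f i x - σ i / 2 * ‖x‖ ^ 2))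
    (hlip : ∀ i x y, ‖f' i x - f' i y‖ ≤ l i * ‖x - y‖)
    (w : Fin N → ℝ) (hw : ∀ i, 0 ≤ w i)
    (xstar : E) (α : ℝ) (hα : 0 ≤ α) :
    ∀ y : E,
      ‖(y - xstar) - α • ∑ i, w i • (f' i y - f' i xstar)‖ ^ 2 ≤
        (1 + (N : ℝ) * ∑ i, (α * w i * l i) ^ 2 - 2 * α * ∑ i, w i * σ i) *
          ‖y - xstar‖ ^ 2 :=
  weighted_gradient_step_contraction_general N f f' σ l hgrad hstrong hlip w hw xstar α hα
end
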